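/- arXiv:2107.06324 — 4 statements merged into one kernel-verified Lean document; each statement's English description precedes it below -/
import Mathlib

section
/- Let d ≥ 2 and v ∈ ℝ^{d−1}. Set c := (1 + |v|²)^{−1/2} and let Õ be the unique symmetric positive definite (d−1)×(d−1) matrix with Õ² = (Id_{d−1} + v vᵀ)^{−1}. Then the d×d block matrix O := [[Õ, Õv], [−c vᵀ, c]] (top-left block Õ, top-right column Õv, bottom-left row −c vᵀ, bottom-right entry c) is an orthogonal matrix, and (det Õ)² = 1/(1 + |v|²). -/
/-!
`O` factors as `diag(Õ, c) * M` with `M = [[1, v], [-vᵀ, 1]]`, and the off-diagonal blocks of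
`M Mᵀ` cancel: `M Mᵀ = diag(1 + v vᵀ, 1 + |v|²)`. Hence
`O Oᵀ = diag(Õ (1 + v vᵀ) Õ, c² (1 + |v|²)) = 1`, where `Õ (1 + v vᵀ) Õ = 1` because `Õ` is a
one-sided, hence two-sided, inverse of `Õ (1 + v vᵀ)`. Taking determinants of the same identity,
with `det (1 + v vᵀ) = 1 + |v|²`, gives `(det Õ)² = 1 / (1 + |v|²)`.
-/

open Matrix

noncomputable section

/-- The block matrix `O = [[Õ, Õv], [−c vᵀ, c]]` on `ℝ^{n+1} = ℝ^n × ℝ`. -/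
def blockOrth {n : ℕ} (Ot : Matrix (Fin n) (Fin n) ℝ) (v : Fin n → ℝ) (c : ℝ) :
    Matrix (Fin (n + 1)) (Fin (n + 1)) ℝ :=
  Matrix.of fun i j =>
    if hi : (i : ℕ) < n then
      if hj : (j : ℕ) < n then Ot ⟨i, hi⟩ ⟨j, hj⟩ else (Ot.mulVec v) ⟨i, hi⟩
    else
      if hj : (j : ℕ) < n then -(c * v ⟨j, hj⟩) else c

namespace Matrix

variable {m n R : Type*} [Fintype m] [Fintype n] [CommRing R]

theorem mul_mul_self_eq_one_of_mul_self_eq_inv [DecidableEq m] {A B : Matrix m m R}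
    (hB : IsUnit B.det) (h : A * A = B⁻¹) : A * B * A = 1 := by
  rw [mul_eq_one_comm, ← Matrix.mul_assoc, h, nonsing_inv_mul _ hB]

theorem det_one_add_vecMulVec [DecidableEq m] (u v : m → R) :
    (1 + vecMulVec u v).det = 1 + v ⬝ᵥ u := by
  rw [vecMulVec_eq Unit, det_one_add_replicateCol_mul_replicateRow]

theorem fromBlocks_replicateCol_mul_transpose {ι : Type*} [Fintype ι] [DecidableEq ι] [Unique ι]
    [DecidableEq m] (v : m → R) :
    fromBlocks 1 (replicateCol ι v) (-replicateRow ι v) 1 *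
        (fromBlocks 1 (replicateCol ι v) (-replicateRow ι v) 1)ᵀ =
      fromBlocks (1 + vecMulVec v v) 0 0 ((1 + v ⬝ᵥ v) • 1) := by
  rw [fromBlocks_transpose, fromBlocks_multiply]
  simp only [transpose_replicateCol, transpose_replicateRow, transpose_one, transpose_neg,
    Matrix.one_mul, Matrix.mul_one, Matrix.neg_mul, Matrix.mul_neg, neg_neg, neg_add_cancel,
    replicateRow_mul_replicateCol]
  congr 2
  · ext i j
    simp [mul_apply, vecMulVec_apply]
  · ext i j
    rw [Subsingleton.elim i j]
    simp [add_comm]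

theorem fromBlocks_zero_zero_mul_mul_transpose (A P : Matrix m m R) (C Q : Matrix n n R) :
    fromBlocks A 0 0 C * fromBlocks P 0 0 Q * (fromBlocks A 0 0 C)ᵀ =
      fromBlocks (A * P * Aᵀ) 0 0 (C * Q * Cᵀ) := by
  simp [fromBlocks_transpose, fromBlocks_multiply]

end Matrix

theorem EuclideanSpace.dotProduct_self_eq_norm_sq {ι : Type*} [Fintype ι]
    (v : EuclideanSpace ℝ ι) : (fun i => v i) ⬝ᵥ (fun i => v i) = ‖v‖ ^ 2 := by
  rw [EuclideanSpace.norm_sq_eq]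
  simp [dotProduct, sq]

theorem blockOrth_eq_reindex {n : ℕ} (A : Matrix (Fin n) (Fin n) ℝ) (v : Fin n → ℝ) (c : ℝ) :
    blockOrth A v c = reindex finSumFinEquiv finSumFinEquiv
      (fromBlocks A 0 0 (c • 1 : Matrix (Fin 1) (Fin 1) ℝ) *
        fromBlocks 1 (replicateCol (Fin 1) v) (-replicateRow (Fin 1) v) 1) := by
  ext i j
  refine Fin.addCases (fun i => ?_) (fun i => ?_) i <;>
    refine Fin.addCases (fun j => ?_) (fun j => ?_) j <;>
    simp [blockOrth, fromBlocks_multiply, Fin.fin_one_eq_zero, mul_apply, mulVec, dotProduct]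

theorem blockOrth_mul_transpose {n : ℕ} (A : Matrix (Fin n) (Fin n) ℝ) (v : Fin n → ℝ) (c : ℝ) :
    blockOrth A v c * (blockOrth A v c)ᵀ = reindex finSumFinEquiv finSumFinEquiv
      (fromBlocks (A * (1 + vecMulVec v v) * Aᵀ) 0 0 ((c ^ 2 * (1 + v ⬝ᵥ v)) • 1)) := by
  rw [blockOrth_eq_reindex, transpose_reindex, reindex_apply, reindex_apply, reindex_apply,
    submatrix_mul_equiv, Matrix.transpose_mul, Matrix.mul_assoc,
    ← Matrix.mul_assoc (fromBlocks 1 _ _ _), fromBlocks_replicateCol_mul_transpose,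
    ← Matrix.mul_assoc, fromBlocks_zero_zero_mul_mul_transpose]
  congr 2
  simp only [transpose_smul, transpose_one, Matrix.smul_mul, Matrix.one_mul, smul_smul]
  ring_nf

theorem blockOrth_is_orthogonal_general
    {n : ℕ}
    (v : EuclideanSpace ℝ (Fin n))
    (c : ℝ) (hc : c = (Real.sqrt (1 + ‖v‖ ^ 2))⁻¹)
    (Ot : Matrix (Fin n) (Fin n) ℝ)
    (hOtSymm : Ot.IsSymm)
    (hOtSq : Ot * Ot = (1 + Matrix.vecMulVec (fun i => v i) (fun i => v i))⁻¹) :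
    (blockOrth Ot (fun i => v i) c)ᵀ * blockOrth Ot (fun i => v i) c = 1 ∧
    blockOrth Ot (fun i => v i) c * (blockOrth Ot (fun i => v i) c)ᵀ = 1 ∧
    Ot.det ^ 2 = 1 / (1 + ‖v‖ ^ 2) := by
  have hpos : 0 < 1 + ‖v‖ ^ 2 := by positivity
  have hdet : (1 + vecMulVec (fun i => v i) (fun i => v i)).det = 1 + ‖v‖ ^ 2 := by
    rw [det_one_add_vecMulVec, EuclideanSpace.dotProduct_self_eq_norm_sq]
  have hc2 : c ^ 2 * (1 + ‖v‖ ^ 2) = 1 := by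
    rw [hc, inv_pow, Real.sq_sqrt hpos.le, inv_mul_cancel₀ hpos.ne']
  have hOt : Ot * (1 + vecMulVec (fun i => v i) (fun i => v i)) * Otᵀ = 1 := by
    rw [hOtSymm.eq]
    exact mul_mul_self_eq_one_of_mul_self_eq_inv (by rw [hdet]; exact hpos.ne'.isUnit) hOtSq
  have hOOt : blockOrth Ot (fun i => v i) c * (blockOrth Ot (fun i => v i) c)ᵀ = 1 := by
    rw [blockOrth_mul_transpose, hOt, EuclideanSpace.dotProduct_self_eq_norm_sq, hc2, one_smul,
      fromBlocks_one, reindex_apply, submatrix_one_equiv]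
  refine ⟨mul_eq_one_comm.mp hOOt, hOOt, ?_⟩
  have hdetOt := congrArg det hOt
  rw [det_mul, det_mul, det_transpose, hdet, det_one] at hdetOt
  exact eq_one_div_of_mul_eq_one_left (by linear_combination hdetOt)

/-- for `v ∈ ℝ^{d−1}`, `c = (1+|v|²)^{−1/2}`, and `Õ` the symmetric positive
definite matrix with `Õ² = (Id + v vᵀ)⁻¹`, the block matrix `O = [[Õ, Õv], [−c vᵀ, c]]`
is orthogonal, and `(det Õ)² = 1/(1+|v|²)`. -/
theorem blockOrth_is_orthogonal
    {n : ℕ} (hn : 1 ≤ n)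
    (v : EuclideanSpace ℝ (Fin n))
    (c : ℝ) (hc : c = (Real.sqrt (1 + ‖v‖ ^ 2))⁻¹)
    (Ot : Matrix (Fin n) (Fin n) ℝ)
    (hOtSymm : Ot.IsSymm) (hOtPD : Ot.PosDef)
    (hOtSq : Ot * Ot = (1 + Matrix.vecMulVec (fun i => v i) (fun i => v i))⁻¹) :
    (blockOrth Ot (fun i => v i) c)ᵀ * blockOrth Ot (fun i => v i) c = 1 ∧
    blockOrth Ot (fun i => v i) c * (blockOrth Ot (fun i => v i) c)ᵀ = 1 ∧
    Ot.det ^ 2 = 1 / (1 + ‖v‖ ^ 2) :=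
  blockOrth_is_orthogonal_general v c hc Ot hOtSymm hOtSq
end
end

section
/- Let d ≥ 2, let θ : [0,∞) → [0,∞) be nondecreasing, and let φ : ℝ^{d−1} → ℝ be C¹ with ‖∇φ‖_∞ ≤ C₀ and |∇φ(x) − ∇φ(y)| ≤ θ(|x − y|) for all x, y. Let x₀ ∈ ℝ^{d−1} with |∇φ(x₀)| ≤ 1, set c := (1+|∇φ(x₀)|²)^{−1/2}, let Õ be the symmetric positive definite matrix with Õ² = (Id_{d−1} + ∇φ(x₀)∇φ(x₀)ᵀ)^{−1}, set b := Õ∇φ(x₀), and define g : ℝ^{d−1} → ℝ^{d−1} by g(x) := Õ(x − x₀) + (φ(x) − φ(x₀)) b. Suppose V ⊆ ℝ^{d−1} is an open convex neighborhood of 0 contained in B_{1/4}(0), and h : V → ℝ^{d−1} is differentiable with g(h(y)) = y for all y ∈ V, h(0) = x₀, and ‖Dh(y)‖ ≤ 2 for all y ∈ V. Define φ̃(y) := −c ∇φ(x₀)·(h(y) − x₀) + c (φ(h(y)) − φ(x₀)) for y ∈ V. Then there is a constant C depending only on d, C₀ and θ(1) such that |∇φ̃(y) − ∇φ̃(y′)|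 ≤ C θ(2|y − y′|) for all y, y′ ∈ V. -/
open Matrix Set Metric

noncomputable section

abbrev Eb (n : ℕ) := EuclideanSpace ℝ (Fin n)

/-- the gradient of `φ : ℝ^n → ℝ` at `y`, as a vector of `ℝ^n` -/
def gradVec {n : ℕ} (φ : Eb n → ℝ) (y : Eb n) : Fin n → ℝ :=
  fun i => fderiv ℝ φ y (EuclideanSpace.single i 1)

/-- The flattening map `g(x) = Õ(x−x₀) + (φ(x)−φ(x₀)) b` with `b = Õ∇φ(x₀)`. -/
def gFlat {n : ℕ} (Ot : Matrix (Fin n) (Fin n) ℝ) (φ : Eb n → ℝ) (x₀ : Eb n)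
    (x : Eb n) : Eb n :=
  (EuclideanSpace.equiv (Fin n) ℝ).symm
    (fun i => Ot.mulVec (fun j => x j - x₀ j) i
      + (φ x - φ x₀) * Ot.mulVec (gradVec φ x₀) i)

/-- The rotated graph function
`φ̃(y) = −c∇φ(x₀)·(h(y)−x₀) + c(φ(h(y))−φ(x₀))`, where `h` is a local inverse of `g`. -/
def phiTilde {n : ℕ} (φ : Eb n → ℝ) (x₀ : Eb n) (c : ℝ) (h : Eb n → Eb n)
    (y : Eb n) : ℝ :=
  -c * (∑ i, gradVec φ x₀ i * (h y i - x₀ i)) + c * (φ (h y) - φ x₀)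

/-! Differentiating `φ̃ = c (φ ∘ h − φ(x₀) − Dφ(x₀)(h − x₀))` gives `Dφ̃ = c (Dφ ∘ h − Dφ(x₀)) Dh`,
so `Dφ̃(y) − Dφ̃(y')` is controlled by the oscillation of `Dφ ∘ h`, at most `θ(2|y − y'|)` because
`h` is 2-Lipschitz on the convex set `V`, and by that of `Dh`. As `Dh = (Dg ∘ h)⁻¹`,
`Dh(y) − Dh(y') = Dh(y) (Dg(h y') − Dg(h y)) Dh(y')`, and `Dg` varies only through the rank-one
term `Dφ ⊗ b`, where `|b|² = |∇φ(x₀)|² / (1 + |∇φ(x₀)|²) ≤ 1`. -/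

open Filter Topology

lemma dotProduct_inv_one_add_vecMulVec_self_le_one {ι : Type*} [Fintype ι] [DecidableEq ι]
    (v : ι → ℝ) : v ⬝ᵥ ((1 + vecMulVec v v)⁻¹ *ᵥ v) ≤ 1 := by
  set A := 1 + vecMulVec v v
  have hA : IsUnit A := (PosDef.one.add_posSemidef (posSemidef_vecMulVec_self_star v)).isUnit
  have hs : 0 ≤ v ⬝ᵥ v := Finset.sum_nonneg fun i _ => mul_self_nonneg _
  have hv : A *ᵥ ((1 + v ⬝ᵥ v)⁻¹ • v) = v := by
    rw [mulVec_smul, add_mulVec, one_mulVec, vecMulVec_mulVec, op_smul_eq_smul]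
    match_scalars
    field_simp
  have hAinv : A⁻¹ *ᵥ v = (1 + v ⬝ᵥ v)⁻¹ • v := by
    conv_lhs => rw [← hv]
    rw [mulVec_mulVec, nonsing_inv_mul _ ((isUnit_iff_isUnit_det A).mp hA), one_mulVec]
  rw [hAinv, dotProduct_smul, smul_eq_mul, inv_mul_le_iff₀ (by positivity)]
  linarith

lemma norm_toLp_mulVec_le_one {ι : Type*} [Fintype ι] [DecidableEq ι] {O : Matrix ι ι ℝ}
    {v : ι → ℝ} (hO : O.IsSymm) (hO2 : O * O = (1 + vecMulVec v v)⁻¹) :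
    ‖WithLp.toLp 2 (O *ᵥ v)‖ ≤ 1 := by
  have hsq : ‖WithLp.toLp 2 (O *ᵥ v)‖ ^ 2 ≤ 1 := by
    rw [← real_inner_self_eq_norm_sq, EuclideanSpace.inner_toLp_toLp, star_trivial,
      dotProduct_mulVec, ← mulVec_transpose, hO.eq, mulVec_mulVec, hO2, dotProduct_comm]
    exact dotProduct_inv_one_add_vecMulVec_self_le_one v
  nlinarith [norm_nonneg (WithLp.toLp 2 (O *ᵥ v))]

namespace ContinuousLinearMap

variable {𝕜 E F G : Type*} [NontriviallyNormedField 𝕜] [NormedAddCommGroup E] [NormedSpace 𝕜 E]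
  [NormedAddCommGroup F] [NormedSpace 𝕜 F] [NormedAddCommGroup G] [NormedSpace 𝕜 G]

lemma smulRight_sub_smulRight (c c' : E →L[𝕜] 𝕜) (f : F) :
    c.smulRight f - c'.smulRight f = (c - c').smulRight f := by
  ext
  simp [sub_smul]

lemma comp_eq_id_comm [FiniteDimensional 𝕜 E] {A B : E →L[𝕜] E}
    (h : A.comp B = ContinuousLinearMap.id 𝕜 E) : B.comp A = ContinuousLinearMap.id 𝕜 E := by
  have hlin : (A : E →ₗ[𝕜] E) * B = 1 := by
    ext x
    exact congr($h x)
  ext x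
  exact congr($(mul_eq_one_comm.mp hlin) x)

lemma sub_eq_comp_sub_comp_of_inverse {P Q : E →L[𝕜] F} {P' Q' : F →L[𝕜] E}
    (hP : P'.comp P = ContinuousLinearMap.id 𝕜 E)
    (hQ : Q.comp Q' = ContinuousLinearMap.id 𝕜 F) :
    P' - Q' = P'.comp ((Q - P).comp Q') := by
  rw [sub_comp, comp_sub, hQ, ← comp_assoc, hP, comp_id, id_comp]

lemma norm_comp_sub_comp_le (A B : F →L[𝕜] G) (P Q : E →L[𝕜] F) :
    ‖A.comp P - B.comp Q‖ ≤ ‖A - B‖ * ‖P‖ + ‖B‖ * ‖P - Q‖ := by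
  have : A.comp P - B.comp Q = (A - B).comp P + B.comp (P - Q) := by
    rw [sub_comp, comp_sub]; abel
  rw [this]
  exact (norm_add_le _ _).trans (add_le_add (opNorm_comp_le _ _) (opNorm_comp_le _ _))

end ContinuousLinearMap

lemma fderiv_apply_eq_sum_gradVec {n : ℕ} (φ : Eb n → ℝ) (x w : Eb n) :
    fderiv ℝ φ x w = ∑ i, gradVec φ x i * w i := by
  conv_lhs => rw [← (EuclideanSpace.basisFun (Fin n) ℝ).sum_repr w]
  simp [gradVec, mul_comm]

lemma gFlat_eq {n : ℕ} (Ot : Matrix (Fin n) (Fin n) ℝ) (φ : Eb n → ℝ) (x₀ : Eb n) :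
    gFlat Ot φ x₀ = fun x => toEuclideanCLM (𝕜 := ℝ) Ot (x - x₀)
      + (φ x - φ x₀) • WithLp.toLp 2 (Ot *ᵥ gradVec φ x₀) := by
  ext x i
  simp [gFlat, ← Pi.sub_apply, ← mulVec_sub]

lemma hasFDerivAt_gFlat {n : ℕ} (Ot : Matrix (Fin n) (Fin n) ℝ) {φ : Eb n → ℝ} (x₀ : Eb n)
    {x : Eb n} (hφ : DifferentiableAt ℝ φ x) :
    HasFDerivAt (gFlat Ot φ x₀)
      (toEuclideanCLM (𝕜 := ℝ) Ot
        + (fderiv ℝ φ x).smulRight (WithLp.toLp 2 (Ot *ᵥ gradVec φ x₀))) x := by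
  rw [gFlat_eq]
  exact ((toEuclideanCLM (𝕜 := ℝ) Ot).hasFDerivAt.comp x ((hasFDerivAt_id x).sub_const x₀)).add
    ((hφ.hasFDerivAt.sub_const (φ x₀)).smul_const _)

lemma norm_fderiv_gFlat_sub_le {n : ℕ} {Ot : Matrix (Fin n) (Fin n) ℝ} {φ : Eb n → ℝ}
    {x₀ : Eb n} (hOt : Ot.IsSymm)
    (hOt2 : Ot * Ot = (1 + vecMulVec (gradVec φ x₀) (gradVec φ x₀))⁻¹)
    (hφ : Differentiable ℝ φ) (x x' : Eb n) :
    ‖fderiv ℝ (gFlat Ot φ x₀) x - fderiv ℝ (gFlat Ot φ x₀) x'‖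
      ≤ ‖fderiv ℝ φ x - fderiv ℝ φ x'‖ := by
  rw [(hasFDerivAt_gFlat Ot x₀ (hφ x)).fderiv, (hasFDerivAt_gFlat Ot x₀ (hφ x')).fderiv,
    add_sub_add_left_eq_sub, ContinuousLinearMap.smulRight_sub_smulRight,
    ContinuousLinearMap.norm_smulRight_apply]
  exact mul_le_of_le_one_right (norm_nonneg _) (norm_toLp_mulVec_le_one hOt hOt2)


section InverseDerivative

variable {𝕜 E F : Type*} [NontriviallyNormedField 𝕜] [NormedAddCommGroup E] [NormedSpace 𝕜 E]
  [NormedAddCommGroup F] [NormedSpace 𝕜 F]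

lemma fderiv_comp_fderiv_eq_id_of_eventually_leftInverse {g : F → E} {h : E → F} {z : E}
    (hgh : ∀ᶠ y in 𝓝 z, g (h y) = y) (hg : DifferentiableAt 𝕜 g (h z))
    (hh : DifferentiableAt 𝕜 h z) :
    (fderiv 𝕜 g (h z)).comp (fderiv 𝕜 h z) = ContinuousLinearMap.id 𝕜 E := by
  rw [← fderiv_comp z hg hh, (show g ∘ h =ᶠ[𝓝 z] id from hgh).fderiv_eq, fderiv_id]

lemma norm_fderiv_sub_le_of_eventually_leftInverse [FiniteDimensional 𝕜 E] {g h : E → E}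
    {z z' : E} (hgh : ∀ᶠ y in 𝓝 z, g (h y) = y) (hgh' : ∀ᶠ y in 𝓝 z', g (h y) = y)
    (hg : DifferentiableAt 𝕜 g (h z)) (hg' : DifferentiableAt 𝕜 g (h z'))
    (hh : DifferentiableAt 𝕜 h z) (hh' : DifferentiableAt 𝕜 h z') :
    ‖fderiv 𝕜 h z - fderiv 𝕜 h z'‖
      ≤ ‖fderiv 𝕜 h z‖ * ‖fderiv 𝕜 g (h z') - fderiv 𝕜 g (h z)‖ * ‖fderiv 𝕜 h z'‖ := by
  rw [ContinuousLinearMap.sub_eq_comp_sub_comp_of_inverse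
    (ContinuousLinearMap.comp_eq_id_comm
      (fderiv_comp_fderiv_eq_id_of_eventually_leftInverse hgh hg hh))
    (fderiv_comp_fderiv_eq_id_of_eventually_leftInverse hgh' hg' hh')]
  refine (ContinuousLinearMap.opNorm_comp_le _ _).trans ?_
  rw [mul_assoc]
  gcongr
  exact ContinuousLinearMap.opNorm_comp_le _ _

end InverseDerivative

lemma phiTilde_eq {n : ℕ} (φ : Eb n → ℝ) (x₀ : Eb n) (c : ℝ) (h : Eb n → Eb n) :
    phiTilde φ x₀ c h = fun y => c * (φ (h y) - φ x₀ - fderiv ℝ φ x₀ (h y - x₀)) := by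
  ext y
  simp only [phiTilde, fderiv_apply_eq_sum_gradVec, PiLp.sub_apply]
  ring

lemma hasFDerivAt_phiTilde {n : ℕ} {φ : Eb n → ℝ} (x₀ : Eb n) (c : ℝ) {h : Eb n → Eb n}
    {y : Eb n} (hφ : DifferentiableAt ℝ φ (h y)) (hh : DifferentiableAt ℝ h y) :
    HasFDerivAt (phiTilde φ x₀ c h)
      (c • (fderiv ℝ φ (h y) - fderiv ℝ φ x₀).comp (fderiv ℝ h y)) y := by
  rw [phiTilde_eq, ContinuousLinearMap.sub_comp]
  exact (((hφ.hasFDerivAt.comp y hh.hasFDerivAt).sub_const (φ x₀)).sub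
    ((fderiv ℝ φ x₀).hasFDerivAt.comp y (hh.hasFDerivAt.sub_const x₀))).const_mul c

lemma norm_fderiv_phiTilde_sub_le {n : ℕ} {Ot : Matrix (Fin n) (Fin n) ℝ} {φ : Eb n → ℝ}
    {x₀ : Eb n} {c Λ K M : ℝ} {V : Set (Eb n)} {h : Eb n → Eb n} {y y' : Eb n}
    (hOt : Ot.IsSymm) (hOt2 : Ot * Ot = (1 + vecMulVec (gradVec φ x₀) (gradVec φ x₀))⁻¹)
    (hφ : Differentiable ℝ φ) (hc : |c| ≤ 1) (hV : IsOpen V)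
    (hgh : ∀ z ∈ V, gFlat Ot φ x₀ (h z) = z) (hh : ∀ z ∈ V, DifferentiableAt ℝ h z)
    (hDh : ∀ z ∈ V, ‖fderiv ℝ h z‖ ≤ Λ) (hy : y ∈ V) (hy' : y' ∈ V)
    (hK : ‖fderiv ℝ φ (h y) - fderiv ℝ φ (h y')‖ ≤ K)
    (hM : ‖fderiv ℝ φ (h y') - fderiv ℝ φ x₀‖ ≤ M) :
    ‖fderiv ℝ (phiTilde φ x₀ c h) y - fderiv ℝ (phiTilde φ x₀ c h) y'‖
      ≤ (Λ + M * Λ ^ 2) * K := by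
  have hK0 : 0 ≤ K := (norm_nonneg _).trans hK
  have hM0 : 0 ≤ M := (norm_nonneg _).trans hM
  have hΛ : 0 ≤ Λ := (norm_nonneg _).trans (hDh y hy)
  have hDh_sub : ‖fderiv ℝ h y - fderiv ℝ h y'‖ ≤ Λ ^ 2 * K := by
    have hgh_nhds : ∀ z ∈ V, ∀ᶠ w in 𝓝 z, gFlat Ot φ x₀ (h w) = w := fun z hz =>
      eventually_of_mem (hV.mem_nhds hz) hgh
    refine (norm_fderiv_sub_le_of_eventually_leftInverse (hgh_nhds y hy) (hgh_nhds y' hy')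
      (hasFDerivAt_gFlat Ot x₀ (hφ _)).differentiableAt
      (hasFDerivAt_gFlat Ot x₀ (hφ _)).differentiableAt (hh y hy) (hh y' hy')).trans ?_
    have hDg := (norm_fderiv_gFlat_sub_le hOt hOt2 hφ (h y') (h y)).trans
      ((norm_sub_rev _ _).trans_le hK)
    calc _ ≤ Λ * K * Λ := by gcongr; exacts [hDh y hy, hDh y' hy']
      _ = Λ ^ 2 * K := by ring
  rw [(hasFDerivAt_phiTilde x₀ c (hφ _) (hh y hy)).fderiv,
    (hasFDerivAt_phiTilde x₀ c (hφ _) (hh y' hy')).fderiv, ← smul_sub, norm_smul,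
    Real.norm_eq_abs]
  have hcomp := ContinuousLinearMap.norm_comp_sub_comp_le (fderiv ℝ φ (h y) - fderiv ℝ φ x₀)
    (fderiv ℝ φ (h y') - fderiv ℝ φ x₀) (fderiv ℝ h y) (fderiv ℝ h y')
  rw [sub_sub_sub_cancel_right] at hcomp
  calc _ ≤ 1 * (K * Λ + M * (Λ ^ 2 * K)) := by
        gcongr
        refine hcomp.trans (add_le_add ?_ ?_)
        · gcongr; exact hDh y hy
        · gcongr
    _ = (Λ + M * Λ ^ 2) * K := by ring

theorem phiTilde_gradient_modulus_general
    {n : ℕ} (C₀ M : ℝ) (hM : 0 ≤ M) :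
    ∃ C : ℝ, 0 < C ∧
      ∀ (θ : ℝ → ℝ), (∀ r : ℝ, 0 ≤ r → 0 ≤ θ r) → MonotoneOn θ (Set.Ici (0:ℝ)) →
        θ 1 ≤ M →
      ∀ (φ : Eb n → ℝ), ContDiff ℝ 1 φ → (∀ x, ‖fderiv ℝ φ x‖ ≤ C₀) →
        (∀ x y : Eb n, ‖fderiv ℝ φ x - fderiv ℝ φ y‖ ≤ θ ‖x - y‖) →
      ∀ (x₀ : Eb n), ‖fderiv ℝ φ x₀‖ ≤ 1 →
      ∀ (Ot : Matrix (Fin n) (Fin n) ℝ), Ot.IsSymm → Ot.PosDef →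
        Ot * Ot = (1 + Matrix.vecMulVec (gradVec φ x₀) (gradVec φ x₀))⁻¹ →
      ∀ (V : Set (Eb n)), IsOpen V → Convex ℝ V → (0 : Eb n) ∈ V →
        V ⊆ ball (0 : Eb n) (1/4) →
      ∀ (h : Eb n → Eb n),
        (∀ y ∈ V, gFlat Ot φ x₀ (h y) = y) →
        h 0 = x₀ →
        (∀ y ∈ V, DifferentiableAt ℝ h y) →
        (∀ y ∈ V, ‖fderiv ℝ h y‖ ≤ 2) →
      ∀ y ∈ V, ∀ y' ∈ V,
        ‖fderiv ℝ (phiTilde φ x₀ (Real.sqrt (1 + ‖fderiv ℝ φ x₀‖ ^ 2))⁻¹ h) y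
          - fderiv ℝ (phiTilde φ x₀ (Real.sqrt (1 + ‖fderiv ℝ φ x₀‖ ^ 2))⁻¹ h) y'‖
          ≤ C * θ (2 * ‖y - y'‖) := by
  refine ⟨2 + M * 2 ^ 2, by positivity, ?_⟩
  intro θ _ hθ_mono hθ1 φ hφ _ hφθ x₀ _ Ot hOt _ hOt2 V hV hVconv hV0 hVball h hgh h0 hh hDh
    y hy y' hy'
  have hlip : ∀ a ∈ V, ∀ b ∈ V, ‖h a - h b‖ ≤ 2 * ‖a - b‖ := fun a ha b hb =>
    hVconv.norm_image_sub_le_of_norm_fderiv_le hh hDh hb ha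
  have hK : ‖fderiv ℝ φ (h y) - fderiv ℝ φ (h y')‖ ≤ θ (2 * ‖y - y'‖) :=
    (hφθ _ _).trans (hθ_mono (norm_nonneg _) (mem_Ici.mpr (by positivity)) (hlip y hy y' hy'))
  have hM' : ‖fderiv ℝ φ (h y') - fderiv ℝ φ x₀‖ ≤ M := by
    have hy'_small : ‖h y' - x₀‖ ≤ 1 := by
      have := mem_ball_zero_iff.mp (hVball hy')
      have := hlip y' hy' 0 hV0
      rw [h0, sub_zero] at this
      linarith
    exact ((hφθ _ _).trans (hθ_mono (norm_nonneg _) (mem_Ici.mpr zero_le_one) hy'_small)).trans hθ1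
  have hc : |(Real.sqrt (1 + ‖fderiv ℝ φ x₀‖ ^ 2))⁻¹| ≤ 1 := by
    rw [abs_of_nonneg (by positivity)]
    exact inv_le_one_of_one_le₀ (Real.one_le_sqrt.mpr (by nlinarith))
  exact norm_fderiv_phiTilde_sub_le hOt hOt2 (hφ.differentiable one_ne_zero) hc hV hgh hh hDh
    hy hy' hK hM'

/-- the rotated graph function `φ̃` obtained by flattening the graph of a
`C¹` function `φ` (with gradient bound `C₀` and modulus of continuity `θ`) at a point
`x₀` with `|∇φ(x₀)| ≤ 1` satisfies `|∇φ̃(y) − ∇φ̃(y′)| ≤ C θ(2|y − y′|)` on the domain `V`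
of the local inverse, with `C` depending only on the dimension, `C₀` and `θ(1)`. -/
theorem phiTilde_gradient_modulus
    {n : ℕ} (hn : 1 ≤ n) (C₀ M : ℝ) (hC₀ : 0 ≤ C₀) (hM : 0 ≤ M) :
    ∃ C : ℝ, 0 < C ∧
      ∀ (θ : ℝ → ℝ), (∀ r : ℝ, 0 ≤ r → 0 ≤ θ r) → MonotoneOn θ (Set.Ici (0:ℝ)) →
        θ 1 ≤ M →
      ∀ (φ : Eb n → ℝ), ContDiff ℝ 1 φ → (∀ x, ‖fderiv ℝ φ x‖ ≤ C₀) →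
        (∀ x y : Eb n, ‖fderiv ℝ φ x - fderiv ℝ φ y‖ ≤ θ ‖x - y‖) →
      ∀ (x₀ : Eb n), ‖fderiv ℝ φ x₀‖ ≤ 1 →
      ∀ (Ot : Matrix (Fin n) (Fin n) ℝ), Ot.IsSymm → Ot.PosDef →
        Ot * Ot = (1 + Matrix.vecMulVec (gradVec φ x₀) (gradVec φ x₀))⁻¹ →
      ∀ (V : Set (Eb n)), IsOpen V → Convex ℝ V → (0 : Eb n) ∈ V →
        V ⊆ ball (0 : Eb n) (1/4) →
      ∀ (h : Eb n → Eb n),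
        (∀ y ∈ V, gFlat Ot φ x₀ (h y) = y) →
        h 0 = x₀ →
        (∀ y ∈ V, DifferentiableAt ℝ h y) →
        (∀ y ∈ V, ‖fderiv ℝ h y‖ ≤ 2) →
      ∀ y ∈ V, ∀ y' ∈ V,
        ‖fderiv ℝ (phiTilde φ x₀ (Real.sqrt (1 + ‖fderiv ℝ φ x₀‖ ^ 2))⁻¹ h) y
          - fderiv ℝ (phiTilde φ x₀ (Real.sqrt (1 + ‖fderiv ℝ φ x₀‖ ^ 2))⁻¹ h) y'‖
          ≤ C * θ (2 * ‖y - y'‖) :=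
  phiTilde_gradient_modulus_general C₀ M hM
end
end

section
/- Let θ : (0,∞) → [0,∞) be nondecreasing and locally integrable against ds/s, and define θ̂(r) := (1/log²2) ∫_r^{2r} (1/t) ( ∫_t^{2t} θ(s)/s ds ) dt. Then θ̂ is differentiable on (0,∞) with ρ θ̂′(ρ) = (1/log²2) ∫_ρ^{2ρ} (θ(2s) − θ(s))/s ds, and for every ρ > 0 one has 3θ̂(ρ) + 3ρ θ̂′(ρ) ≤ 13 θ(4ρ). Consequently, if r₀ > 0 satisfies θ(4r₀) < 1/26, then the function f(ρ) := −ρ + 3ρ θ̂(ρ) is strictly decreasing on (0, r₀], with f′(ρ) ≤ −1 + 13θ(4r₀) < −1/2. -/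
open MeasureTheory Set Filter intervalIntegral

noncomputable section

/-- The smoothed Dini parameter `θ̂(r) = (1/log² 2) ∫_r^{2r} (1/t) ∫_t^{2t} θ(s)/s ds dt`. -/
def smoothedTheta (θ : ℝ → ℝ) (r : ℝ) : ℝ :=
  (1 / (Real.log 2) ^ 2) * ∫ t in r..(2 * r), (1 / t) * ∫ s in t..(2 * t), θ s / s

open Topology

/-!
Write `F(t) = ∫_t^{2t} θ(s)/s ds`. Since `θ(s)/s` is locally integrable on `(0,∞)`, `F` is
continuous there, so by the fundamental theorem of calculus
`θ̂′(ρ) = (2F(2ρ)/(2ρ) − F(ρ)/ρ)/log²2`; the dilation invariance of `ds/s` turns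
`F(2ρ) − F(ρ)` into `∫_ρ^{2ρ} (θ(2s) − θ(s))/s ds`. As `θ ≥ 0` is nondecreasing, both `F(t)`
(for `t ≤ 2ρ`) and this integral are at most `θ(4ρ) log 2`, so `θ̂(ρ) ≤ θ(4ρ)` and
`ρθ̂′(ρ) ≤ θ(4ρ)/log 2 ≤ 2θ(4ρ)`. Hence `f′ = −1 + 3θ̂ + 3ρθ̂′ ≤ −1 + 9θ(4ρ)`, which is negative
on `(0, r₀]` when `θ(4r₀) < 1/26`.
-/

section Primitive

variable {g : ℝ → ℝ}

theorem continuousOn_primitive_Ioi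
    (hg : ∀ a b : ℝ, 0 < a → IntervalIntegrable g volume a b) {a : ℝ} (ha : 0 < a) :
    ContinuousOn (fun y => ∫ s in a..y, g s) (Ioi 0) := by
  intro x (hx : 0 < x)
  have hb₁ : 0 < min a (x / 2) := lt_min ha (half_pos hx)
  have hnhds : uIcc (min a (x / 2)) (max a (2 * x)) ∈ 𝓝 x := by
    rw [uIcc_of_le (min_le_left _ _ |>.trans (le_max_left _ _))]
    exact Icc_mem_nhds ((min_le_right _ _).trans_lt (half_lt_self hx))
      ((by linarith : x < 2 * x).trans_le (le_max_right _ _))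
  have hcont := continuousOn_primitive_interval' (hg _ (max a (2 * x)) hb₁)
    (mem_uIcc.mpr (Or.inl ⟨min_le_left _ _, le_max_left _ _⟩))
  exact (hcont.continuousAt hnhds).continuousWithinAt

theorem continuousOn_integral_self_mul
    (hg : ∀ a b : ℝ, 0 < a → IntervalIntegrable g volume a b) {c : ℝ} (hc : 0 < c) :
    ContinuousOn (fun t => ∫ s in t..(c * t), g s) (Ioi 0) := by
  have hG := continuousOn_primitive_Ioi hg one_pos
  have hGc : ContinuousOn (fun t => ∫ s in (1 : ℝ)..(c * t), g s) (Ioi 0) :=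
    hG.comp (continuousOn_const.mul continuousOn_id) fun t ht => mul_pos hc ht
  refine (hGc.sub hG).congr fun t (ht : 0 < t) => ?_
  exact (integral_interval_sub_left (hg 1 (c * t) one_pos) (hg 1 t one_pos)).symm

end Primitive

theorem hasDerivAt_integral_self_mul {f : ℝ → ℝ} (hf : ContinuousOn f (Ioi 0)) {c ρ : ℝ}
    (hc : 0 < c) (hρ : 0 < ρ) :
    HasDerivAt (fun r => ∫ t in r..(c * r), f t) (c * f (c * ρ) - f ρ) ρ := by
  have hcρ : 0 < c * ρ := mul_pos hc hρ
  have hint : IntervalIntegrable f volume ρ (c * ρ) :=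
    (hf.mono fun x hx => (lt_min hρ hcρ).trans_le hx.1).intervalIntegrable
  have hFTC := integral_hasFDerivAt hint (hf.stronglyMeasurableAtFilter isOpen_Ioi ρ hρ)
    (hf.stronglyMeasurableAtFilter isOpen_Ioi _ hcρ) (hf.continuousAt (Ioi_mem_nhds hρ))
    (hf.continuousAt (Ioi_mem_nhds hcρ))
  have h := hFTC.comp_hasDerivAt ρ ((hasDerivAt_id ρ).prodMk ((hasDerivAt_id ρ).const_mul c))
  exact h.congr_deriv (by simp)

-- At `s = 0` both sides vanish, since `x / 0 = 0`.
theorem comp_mul_div_self_eq {f : ℝ → ℝ} {c : ℝ} (hc : c ≠ 0) :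
    (fun s => f (c * s) / s) = fun s => c * (f (c * s) / (c * s)) := by
  funext s
  rw [← mul_div_assoc, mul_div_mul_left _ _ hc]

theorem integral_comp_mul_div_self (f : ℝ → ℝ) {c : ℝ} (hc : c ≠ 0) (a b : ℝ) :
    ∫ s in a..b, f (c * s) / s = ∫ s in c * a..c * b, f s / s := by
  rw [comp_mul_div_self_eq hc, intervalIntegral.integral_const_mul, ← smul_eq_mul,
    smul_integral_comp_mul_left (fun s => f s / s) c]

theorem IntervalIntegrable.comp_mul_div_self {f : ℝ → ℝ} {c a b : ℝ} (hc : c ≠ 0)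
    (hf : IntervalIntegrable (fun s => f s / s) volume (c * a) (c * b)) :
    IntervalIntegrable (fun s => f (c * s) / s) volume a b := by
  rw [comp_mul_div_self_eq hc]
  simpa [mul_div_cancel_left₀ _ hc] using (hf.comp_mul_left (c := c)).const_mul c

theorem integral_div_self_le_mul_log {f : ℝ → ℝ} {a b M : ℝ} (ha : 0 < a) (hab : a ≤ b)
    (hf : IntervalIntegrable (fun s => f s / s) volume a b) (hM : ∀ s ∈ Icc a b, f s ≤ M) :
    ∫ s in a..b, f s / s ≤ M * Real.log (b / a) := by
  have hb : 0 < b := ha.trans_le hab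
  have hinv : IntervalIntegrable (fun s : ℝ => M * (1 / s)) volume a b :=
    (intervalIntegrable_one_div (fun s hs => ((lt_min ha hb).trans_le hs.1).ne')
      continuousOn_id).const_mul M
  calc ∫ s in a..b, f s / s ≤ ∫ s in a..b, M * (1 / s) :=
        integral_mono_on hab hf hinv fun s hs => by
          rw [mul_one_div]; exact div_le_div_of_nonneg_right (hM s hs) (ha.trans_le hs.1).le
    _ = M * Real.log (b / a) := by
        rw [intervalIntegral.integral_const_mul, integral_one_div_of_pos ha hb]

section SmoothedTheta

variable {θ : ℝ → ℝ} {ρ : ℝ}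

theorem hasDerivAt_smoothedTheta
    (hθint : ∀ a b : ℝ, 0 < a → IntervalIntegrable (fun s => θ s / s) volume a b) (hρ : 0 < ρ) :
    HasDerivAt (smoothedTheta θ)
      (((1 / (Real.log 2) ^ 2) * ∫ s in ρ..(2 * ρ), (θ (2 * s) - θ s) / s) / ρ) ρ := by
  have hcont : ContinuousOn (fun t => (1 / t) * ∫ s in t..(2 * t), θ s / s) (Ioi 0) :=
    (continuousOn_const.div continuousOn_id fun t ht => ne_of_gt ht).mul
      (continuousOn_integral_self_mul hθint two_pos)
  have hθ2 : IntervalIntegrable (fun s => θ (2 * s) / s) volume ρ (2 * ρ) :=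
    (hθint _ _ (mul_pos two_pos hρ)).comp_mul_div_self two_ne_zero
  refine ((hasDerivAt_integral_self_mul hcont two_pos hρ).const_mul _).congr_deriv ?_
  simp only [sub_div, integral_sub hθ2 (hθint ρ (2 * ρ) hρ),
    integral_comp_mul_div_self θ two_ne_zero]
  field_simp

theorem smoothedTheta_le
    (hθmono : MonotoneOn θ (Ioi 0))
    (hθint : ∀ a b : ℝ, 0 < a → IntervalIntegrable (fun s => θ s / s) volume a b) (hρ : 0 < ρ) :
    smoothedTheta θ ρ ≤ θ (4 * ρ) := by
  have hinner : ∀ t ∈ Icc ρ (2 * ρ), ∫ s in t..(2 * t), θ s / s ≤ θ (4 * ρ) * Real.log 2 := by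
    rintro t ⟨hρt, ht2ρ⟩
    have ht : 0 < t := hρ.trans_le hρt
    have h := integral_div_self_le_mul_log (M := θ (4 * ρ)) ht (by linarith)
      (hθint t (2 * t) ht) fun s hs =>
        hθmono (ht.trans_le hs.1) (mem_Ioi.mpr (by linarith)) (by linarith [hs.2])
    rwa [mul_div_cancel_right₀ 2 ht.ne'] at h
  have houter_int :
      IntervalIntegrable (fun t => (∫ s in t..(2 * t), θ s / s) / t) volume ρ (2 * ρ) :=
    ((continuousOn_integral_self_mul hθint two_pos).div continuousOn_id fun t ht => ne_of_gt ht)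
      |>.mono (fun t ht => hρ.trans_le ht.1) |>.intervalIntegrable_of_Icc (by linarith)
  have houter := integral_div_self_le_mul_log hρ (by linarith) houter_int hinner
  rw [mul_div_cancel_right₀ 2 hρ.ne'] at houter
  calc smoothedTheta θ ρ
      = (∫ t in ρ..(2 * ρ), (∫ s in t..(2 * t), θ s / s) / t) / Real.log 2 ^ 2 := by
        simp only [smoothedTheta, one_div_mul_eq_div]
    _ ≤ θ (4 * ρ) * Real.log 2 * Real.log 2 / Real.log 2 ^ 2 := by gcongr
    _ = θ (4 * ρ) := by field_simp

theorem integral_sub_comp_two_mul_div_self_le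
    (hθnn : ∀ s : ℝ, 0 < s → 0 ≤ θ s) (hθmono : MonotoneOn θ (Ioi 0))
    (hθint : ∀ a b : ℝ, 0 < a → IntervalIntegrable (fun s => θ s / s) volume a b) (hρ : 0 < ρ) :
    ∫ s in ρ..(2 * ρ), (θ (2 * s) - θ s) / s ≤ θ (4 * ρ) * Real.log 2 := by
  have hint : IntervalIntegrable (fun s => (θ (2 * s) - θ s) / s) volume ρ (2 * ρ) := by
    simpa only [sub_div] using
      ((hθint _ _ (mul_pos two_pos hρ)).comp_mul_div_self two_ne_zero).sub (hθint ρ (2 * ρ) hρ)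
  have h := integral_div_self_le_mul_log (M := θ (4 * ρ)) hρ (by linarith) hint
    fun s ⟨hρs, hs2ρ⟩ => by
      have hs : 0 < s := hρ.trans_le hρs
      linarith [hθnn s hs, hθmono (mem_Ioi.mpr (by linarith) : 2 * s ∈ Ioi 0)
        (mem_Ioi.mpr (by linarith) : 4 * ρ ∈ Ioi 0) (by linarith)]
  rwa [mul_div_cancel_right₀ 2 hρ.ne'] at h

theorem smoothedTheta_add_deriv_le
    (hθnn : ∀ s : ℝ, 0 < s → 0 ≤ θ s) (hθmono : MonotoneOn θ (Ioi 0))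
    (hθint : ∀ a b : ℝ, 0 < a → IntervalIntegrable (fun s => θ s / s) volume a b) (hρ : 0 < ρ) :
    3 * smoothedTheta θ ρ
      + 3 * ρ * (((1 / (Real.log 2) ^ 2) * ∫ s in ρ..(2 * ρ), (θ (2 * s) - θ s) / s) / ρ)
      ≤ 13 * θ (4 * ρ) := by
  have hL : 1 / 2 < Real.log 2 := by linarith [Real.log_two_gt_d9]
  have hθ4 : 0 ≤ θ (4 * ρ) := hθnn _ (by linarith)
  have hderiv : ρ * (((1 / (Real.log 2) ^ 2) * ∫ s in ρ..(2 * ρ), (θ (2 * s) - θ s) / s) / ρ)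
      ≤ 2 * θ (4 * ρ) :=
    calc ρ * (((1 / (Real.log 2) ^ 2) * ∫ s in ρ..(2 * ρ), (θ (2 * s) - θ s) / s) / ρ)
        = (∫ s in ρ..(2 * ρ), (θ (2 * s) - θ s) / s) / Real.log 2 ^ 2 := by field_simp
      _ ≤ θ (4 * ρ) * Real.log 2 / Real.log 2 ^ 2 := by
        gcongr; exact integral_sub_comp_two_mul_div_self_le hθnn hθmono hθint hρ
      _ = θ (4 * ρ) / Real.log 2 := by field_simp
      _ ≤ 2 * θ (4 * ρ) := by rw [div_le_iff₀ (by linarith)]; nlinarith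
  linarith [smoothedTheta_le hθmono hθint hρ]

theorem hasDerivAt_neg_add_mul_smoothedTheta
    (hθint : ∀ a b : ℝ, 0 < a → IntervalIntegrable (fun s => θ s / s) volume a b) (hρ : 0 < ρ) :
    HasDerivAt (fun r => -r + 3 * r * smoothedTheta θ r)
      (-1 + (3 * smoothedTheta θ ρ + 3 * ρ *
        (((1 / (Real.log 2) ^ 2) * ∫ s in ρ..(2 * ρ), (θ (2 * s) - θ s) / s) / ρ))) ρ := by
  have h := (hasDerivAt_id' ρ).neg.add
    (((hasDerivAt_id' ρ).const_mul 3).mul (hasDerivAt_smoothedTheta hθint hρ))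
  exact h.congr_deriv (by ring)

end SmoothedTheta

/-- `θ̂` is differentiable on `(0,∞)` with
`ρ θ̂′(ρ) = (1/log²2) ∫_ρ^{2ρ} (θ(2s) − θ(s))/s ds`, one has
`3θ̂(ρ) + 3ρθ̂′(ρ) ≤ 13 θ(4ρ)`, and if `θ(4r₀) < 1/26` then
`f(ρ) = −ρ + 3ρθ̂(ρ)` is strictly decreasing on `(0,r₀]`, with derivative
`f′(ρ) ≤ −1 + 13θ(4r₀) < −1/2` there. -/
theorem smoothedTheta_deriv_and_strictAnti
    (θ : ℝ → ℝ)
    (hθnn : ∀ s : ℝ, 0 < s → 0 ≤ θ s)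
    (hθmono : MonotoneOn θ (Set.Ioi (0:ℝ)))
    (hθint : ∀ a b : ℝ, 0 < a → IntervalIntegrable (fun s => θ s / s) volume a b) :
    (∀ ρ : ℝ, 0 < ρ →
      HasDerivAt (smoothedTheta θ)
        (((1 / (Real.log 2) ^ 2) * ∫ s in ρ..(2 * ρ), (θ (2 * s) - θ s) / s) / ρ) ρ) ∧
    (∀ ρ : ℝ, 0 < ρ →
      3 * smoothedTheta θ ρ
        + 3 * ρ * (((1 / (Real.log 2) ^ 2) * ∫ s in ρ..(2 * ρ), (θ (2 * s) - θ s) / s) / ρ)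
        ≤ 13 * θ (4 * ρ)) ∧
    (∀ r₀ : ℝ, 0 < r₀ → θ (4 * r₀) < 1 / 26 →
      StrictAntiOn (fun ρ => -ρ + 3 * ρ * smoothedTheta θ ρ) (Set.Ioc 0 r₀) ∧
      (-1 + 13 * θ (4 * r₀) < -(1 / 2)) ∧
      ∀ ρ ∈ Set.Ioc (0:ℝ) r₀, ∃ y : ℝ,
        HasDerivAt (fun ρ' => -ρ' + 3 * ρ' * smoothedTheta θ ρ') y ρ ∧
        y ≤ -1 + 13 * θ (4 * r₀)) := by
  refine ⟨fun ρ hρ => hasDerivAt_smoothedTheta hθint hρ,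
    fun ρ hρ => smoothedTheta_add_deriv_le hθnn hθmono hθint hρ, fun r₀ _ hsmall => ?_⟩
  have hslope : ∀ ρ ∈ Ioc (0 : ℝ) r₀, ∃ y : ℝ,
      HasDerivAt (fun ρ' => -ρ' + 3 * ρ' * smoothedTheta θ ρ') y ρ ∧
      y ≤ -1 + 13 * θ (4 * r₀) := fun ρ ⟨hρ, hρr₀⟩ =>
    ⟨_, hasDerivAt_neg_add_mul_smoothedTheta hθint hρ, by
      linarith [smoothedTheta_add_deriv_le hθnn hθmono hθint hρ,
        hθmono (mem_Ioi.mpr (by linarith) : 4 * ρ ∈ Ioi 0)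
          (mem_Ioi.mpr (by linarith) : 4 * r₀ ∈ Ioi 0) (by linarith)]⟩
  refine ⟨strictAntiOn_of_deriv_neg (convex_Ioc 0 r₀) (fun ρ hρ => ?_) (fun ρ hρ => ?_),
    by linarith, hslope⟩
  · obtain ⟨y, hy, -⟩ := hslope ρ hρ
    exact hy.continuousAt.continuousWithinAt
  · rw [interior_Ioc] at hρ
    obtain ⟨y, hy, hy_le⟩ := hslope ρ (Ioo_subset_Ioc_self hρ)
    rw [hy.deriv]
    linarith
end
end

section
/- Let d ≥ 2, let θ : (0,∞) → [0,∞) be nondecreasing and locally integrable against ds/s, define θ̂(r) := (1/log²2) ∫_r^{2r} (1/t) ∫_t^{2t} θ(s)/s ds dt, and let r > 0 satisfy θ(4r) < 1/26. Then for all 0 < ρ ≤ ρ′ ≤ r, the open balls satisfy the nesting B_ρ(3ρθ̂(ρ) e_d) ⊆ B_{ρ′}(3ρ′θ̂(ρ′) e_d), where e_d is the last standard basis vector of ℝ^d. -/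
open MeasureTheory Set Filter Metric intervalIntegral

noncomputable section

/-!
Write `Φ g a = ∫_a^{2a} g(s)/s ds` (`logDyadicIntegral`), so that `θ̂ = Φ (Φ θ) / log² 2`. For `g ≥ 0` nondecreasing,
`Φ g` is again nonnegative and nondecreasing, `Φ g a ≤ g(2a) log 2`, and `Φ g` is Lipschitz in
`log a`: `Φ g b - Φ g a ≤ g(2b) log(b/a)`. Splitting
`ρ' G(ρ') - ρ G(ρ) = (ρ' - ρ) G(ρ') + ρ (G(ρ') - G(ρ))` for `G = Φ (Φ θ)` and using
`ρ log(ρ'/ρ) ≤ ρ' - ρ` shows that `ρ ↦ 3ρθ̂(ρ)` is nondecreasing and Lipschitz with constant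
`3 θ(4r) (1 + 1/log 2) < 1` on `(0, r]`; and `B_ρ(c) ⊆ B_ρ'(c')` once `|c - c'| ≤ ρ' - ρ`.
-/

def logDyadicIntegral (g : ℝ → ℝ) (a : ℝ) : ℝ := ∫ s in a..(2 * a), g s / s

theorem smoothedTheta_eq (θ : ℝ → ℝ) (r : ℝ) :
    smoothedTheta θ r = logDyadicIntegral (logDyadicIntegral θ) r / Real.log 2 ^ 2 := by
  simp only [smoothedTheta, logDyadicIntegral, one_div_mul_eq_div]

section LogDyadicIntegral

variable {g : ℝ → ℝ} {a b : ℝ}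

theorem MonotoneOn.intervalIntegrable_div (hg : MonotoneOn g (Ioi 0)) (ha : 0 < a) (hb : 0 < b) :
    IntervalIntegrable (fun s => g s / s) volume a b := by
  have hpos : uIcc a b ⊆ Ioi 0 := fun s hs => lt_of_lt_of_le (lt_min ha hb) hs.1
  simpa only [div_eq_mul_inv] using
    ((hg.mono hpos).intervalIntegrable (μ := volume)).mul_continuousOn
      (continuousOn_inv₀.mono fun s hs => (hpos hs).ne')

theorem integral_div_le_mul_log (hg : MonotoneOn g (Ioi 0)) (ha : 0 < a) (hab : a ≤ b) :
    ∫ s in a..b, g s / s ≤ g b * Real.log (b / a) := by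
  have hb : 0 < b := ha.trans_le hab
  calc ∫ s in a..b, g s / s ≤ ∫ s in a..b, g b / s := by
        refine integral_mono_on hab (hg.intervalIntegrable_div ha hb)
          (monotoneOn_const.intervalIntegrable_div ha hb) fun s hs => ?_
        have hs0 : 0 < s := ha.trans_le hs.1
        exact div_le_div_of_nonneg_right (hg hs0 hb hs.2) hs0.le
    _ = g b * Real.log (b / a) := by
        simp only [div_eq_mul_inv, intervalIntegral.integral_const_mul, integral_inv_of_pos ha hb]

theorem logDyadicIntegral_nonneg (hg₀ : ∀ s, 0 < s → 0 ≤ g s) (ha : 0 < a) :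
    0 ≤ logDyadicIntegral g a :=
  integral_nonneg (by linarith) fun s hs =>
    div_nonneg (hg₀ s (ha.trans_le hs.1)) (ha.trans_le hs.1).le

theorem logDyadicIntegral_le (hg : MonotoneOn g (Ioi 0)) (ha : 0 < a) :
    logDyadicIntegral g a ≤ g (2 * a) * Real.log 2 := by
  have h := integral_div_le_mul_log hg ha (by linarith : a ≤ 2 * a)
  rwa [mul_div_cancel_right₀ _ ha.ne'] at h

theorem logDyadicIntegral_sub_le (hg₀ : ∀ s, 0 < s → 0 ≤ g s) (hg : MonotoneOn g (Ioi 0))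
    (ha : 0 < a) (hab : a ≤ b) :
    logDyadicIntegral g b - logDyadicIntegral g a ≤ g (2 * b) * Real.log (b / a) := by
  have hb : 0 < b := ha.trans_le hab
  have hsplit_a := integral_add_adjacent_intervals
    (hg.intervalIntegrable_div ha (by positivity : 0 < 2 * a))
    (hg.intervalIntegrable_div (by positivity) (by positivity : 0 < 2 * b))
  have hsplit_b := integral_add_adjacent_intervals (hg.intervalIntegrable_div ha hb)
    (hg.intervalIntegrable_div hb (by positivity : 0 < 2 * b))
  have hhead : 0 ≤ ∫ s in a..b, g s / s :=
    integral_nonneg hab fun s hs => div_nonneg (hg₀ s (ha.trans_le hs.1)) (ha.trans_le hs.1).le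
  have htail := integral_div_le_mul_log hg (by positivity : 0 < 2 * a) (by linarith : 2 * a ≤ 2 * b)
  rw [mul_div_mul_left _ _ two_ne_zero] at htail
  unfold logDyadicIntegral
  linarith

theorem logDyadicIntegral_eq_integral_comp_mul (ha : 0 < a) :
    logDyadicIntegral g a = ∫ v in (1 : ℝ)..2, g (a * v) / v := by
  have hscale := integral_comp_mul_left (a := 1) (b := 2) (fun s => g s / s) ha.ne'
  simp only [mul_one, smul_eq_mul] at hscale
  have hunscale :
      ∫ v in (1 : ℝ)..2, g (a * v) / v = ∫ v in (1 : ℝ)..2, a * (g (a * v) / (a * v)) := by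
    refine integral_congr fun v hv => ?_
    rw [uIcc_of_le one_le_two] at hv
    field_simp [(zero_lt_one.trans_le hv.1).ne']
  rw [hunscale, intervalIntegral.integral_const_mul, hscale, mul_inv_cancel_left₀ ha.ne',
    logDyadicIntegral, mul_comm 2 a]

theorem monotoneOn_logDyadicIntegral (hg : MonotoneOn g (Ioi 0)) :
    MonotoneOn (logDyadicIntegral g) (Ioi 0) := by
  intro a ha b hb hab
  have hcomp : ∀ c ∈ Ioi (0 : ℝ), MonotoneOn (fun v => g (c * v)) (Ioi 0) :=
    fun c hc _ hu _ hv huv =>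
      hg (mem_Ioi.2 (mul_pos hc hu)) (mem_Ioi.2 (mul_pos hc hv))
        (mul_le_mul_of_nonneg_left huv hc.le)
  rw [logDyadicIntegral_eq_integral_comp_mul ha, logDyadicIntegral_eq_integral_comp_mul hb]
  refine integral_mono_on one_le_two ((hcomp a ha).intervalIntegrable_div one_pos two_pos)
    ((hcomp b hb).intervalIntegrable_div one_pos two_pos) fun v hv => ?_
  have hv0 : 0 < v := one_pos.trans_le hv.1
  exact div_le_div_of_nonneg_right (hg (mul_pos ha hv0) (mul_pos hb hv0)
    (mul_le_mul_of_nonneg_right hab hv0.le)) hv0.le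

end LogDyadicIntegral

theorem mul_sub_mul_le_of_sub_le_mul_log {G : ℝ → ℝ} {a b K L : ℝ} (ha : 0 < a) (hab : a ≤ b)
    (hL : 0 ≤ L) (hGb : G b ≤ K) (hlip : G b - G a ≤ L * Real.log (b / a)) :
    b * G b - a * G a ≤ (b - a) * (K + L) := by
  have hlog : a * Real.log (b / a) ≤ b - a := by
    have h := Real.log_le_sub_one_of_pos (div_pos (ha.trans_le hab) ha)
    have hscale : a * (b / a - 1) = b - a := by field_simp
    nlinarith
  nlinarith [mul_le_mul_of_nonneg_left hGb (sub_nonneg.2 hab),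
    mul_le_mul_of_nonneg_left hlip ha.le, mul_le_mul_of_nonneg_left hlog hL]

section SmoothedTheta

variable {θ : ℝ → ℝ} (hθ₀ : ∀ s, 0 < s → 0 ≤ θ s) (hθ : MonotoneOn θ (Ioi 0))
include hθ₀ hθ

theorem monotoneOn_mul_smoothedTheta : MonotoneOn (fun ρ => ρ * smoothedTheta θ ρ) (Ioi 0) := by
  intro a ha b hb hab
  have hF₀ : ∀ s, 0 < s → 0 ≤ logDyadicIntegral θ s := fun s hs => logDyadicIntegral_nonneg hθ₀ hs
  have hG := monotoneOn_logDyadicIntegral (monotoneOn_logDyadicIntegral hθ) ha hb hab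
  simp only [smoothedTheta_eq, mul_div_assoc']
  gcongr
  · exact logDyadicIntegral_nonneg hF₀ ha
  · exact hb.le

theorem mul_smoothedTheta_sub_le {ρ ρ' : ℝ} (hρ : 0 < ρ) (hρρ' : ρ ≤ ρ') :
    ρ' * smoothedTheta θ ρ' - ρ * smoothedTheta θ ρ
      ≤ (ρ' - ρ) * (θ (4 * ρ') * (1 + (Real.log 2)⁻¹)) := by
  have hρ' : 0 < ρ' := hρ.trans_le hρρ'
  have hL : 0 < Real.log 2 := Real.log_pos one_lt_two
  have hF₀ : ∀ s, 0 < s → 0 ≤ logDyadicIntegral θ s := fun s hs => logDyadicIntegral_nonneg hθ₀ hs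
  have hF := monotoneOn_logDyadicIntegral hθ
  have hF_le : logDyadicIntegral θ (2 * ρ') ≤ θ (4 * ρ') * Real.log 2 := by
    have h := logDyadicIntegral_le hθ (by positivity : 0 < 2 * ρ')
    rwa [← mul_assoc, show (2 : ℝ) * 2 = 4 by norm_num] at h
  have hθ4 : 0 ≤ θ (4 * ρ') := hθ₀ _ (by positivity)
  have hG_le : logDyadicIntegral (logDyadicIntegral θ) ρ' ≤ θ (4 * ρ') * Real.log 2 ^ 2 :=
    calc logDyadicIntegral (logDyadicIntegral θ) ρ'
        _ ≤ logDyadicIntegral θ (2 * ρ') * Real.log 2 := logDyadicIntegral_le hF hρ'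
        _ ≤ θ (4 * ρ') * Real.log 2 * Real.log 2 := by gcongr
        _ = θ (4 * ρ') * Real.log 2 ^ 2 := by ring
  have hG_sub :
      logDyadicIntegral (logDyadicIntegral θ) ρ' - logDyadicIntegral (logDyadicIntegral θ) ρ
        ≤ θ (4 * ρ') * Real.log 2 * Real.log (ρ' / ρ) := by
    have hlog : 0 ≤ Real.log (ρ' / ρ) := Real.log_nonneg ((one_le_div hρ).2 hρρ')
    calc _ ≤ logDyadicIntegral θ (2 * ρ') * Real.log (ρ' / ρ) :=
          logDyadicIntegral_sub_le hF₀ hF hρ hρρ'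
      _ ≤ θ (4 * ρ') * Real.log 2 * Real.log (ρ' / ρ) := by gcongr
  have h := mul_sub_mul_le_of_sub_le_mul_log hρ hρρ' (by positivity) hG_le hG_sub
  simp only [smoothedTheta_eq, mul_div_assoc', ← sub_div]
  rw [div_le_iff₀ (by positivity)]
  refine h.trans_eq ?_
  field_simp

end SmoothedTheta

/-- if `θ(4r) < 1/26`, the vertically shifted balls
`B_ρ(3ρθ̂(ρ)e_d)` are nested for `0 < ρ ≤ ρ′ ≤ r`. -/
theorem shifted_balls_nested
    (d : ℕ) (hd : 2 ≤ d)
    (θ : ℝ → ℝ)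
    (hθnn : ∀ s : ℝ, 0 < s → 0 ≤ θ s)
    (hθmono : MonotoneOn θ (Set.Ioi (0:ℝ)))
    (r : ℝ) (hsmall : θ (4 * r) < 1 / 26) :
    ∀ ρ ρ' : ℝ, 0 < ρ → ρ ≤ ρ' → ρ' ≤ r →
      ball ((3 * ρ * smoothedTheta θ ρ) •
          EuclideanSpace.single (⟨d - 1, by omega⟩ : Fin d) (1:ℝ)) ρ ⊆
      ball ((3 * ρ' * smoothedTheta θ ρ') •
          EuclideanSpace.single (⟨d - 1, by omega⟩ : Fin d) (1:ℝ)) ρ' := by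
  intro ρ ρ' hρ hρρ' hρ'r
  have hρ' : 0 < ρ' := hρ.trans_le hρρ'
  have hgrowth := monotoneOn_mul_smoothedTheta hθnn hθmono hρ hρ' hρρ'
  have hlip := mul_smoothedTheta_sub_le hθnn hθmono hρ hρρ'
  have hθr : θ (4 * ρ') ≤ θ (4 * r) :=
    hθmono (mem_Ioi.2 (by positivity)) (mem_Ioi.2 (by linarith)) (by linarith)
  have hθ₀ : 0 ≤ θ (4 * ρ') := hθnn _ (by positivity)
  have hlipconst : 3 * (θ (4 * ρ') * (1 + (Real.log 2)⁻¹)) ≤ 1 := by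
    have hinv : (Real.log 2)⁻¹ < 3 / 2 := by
      rw [inv_lt_comm₀ (Real.log_pos one_lt_two) (by norm_num)]
      linarith [Real.log_two_gt_d9]
    nlinarith
  apply ball_subset_ball'
  rw [dist_eq_norm, ← sub_smul, norm_smul, PiLp.norm_single, norm_one, mul_one,
    Real.norm_eq_abs, abs_sub_comm, abs_of_nonneg (by simp only at hgrowth; linarith)]
  nlinarith [mul_le_mul_of_nonneg_left hlipconst (sub_nonneg.2 hρρ')]
end
end
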